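/- Let M > 0 and r ∈ ℝ. Extending L(s) = s + s·H_M(r/s) for s > 0 by L(0) = 2M|r|, the resulting function is convex and lower semicontinuous on [0, ∞); in particular lim_{s→0⁺} s·H_M(r/s) = 2M|r|. -/
import Mathlib


noncomputable def huber (M z : ℝ) : ℝ := if |z| ≤ M then z ^ 2 else 2 * M * |z| - M ^ 2

lemma huber_ge (M : ℝ) (z t : ℝ) (ht : |t| ≤ M) : 2 * t * z - t ^ 2 ≤ huber M z := by
  unfold huber
  split_ifs with h
  · nlinarith [sq_nonneg (z - t)]
  · push_neg at h
    rcases abs_cases t with ⟨h1, h2⟩ | ⟨h1, h2⟩ <;>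
      rcases abs_cases z with ⟨h3, h4⟩ | ⟨h3, h4⟩ <;>
      nlinarith [mul_nonneg (sub_nonneg.2 ht) (sub_nonneg.2 h.le)]

lemma huber_attain (M : ℝ) (hM : 0 < M) (z : ℝ) :
    ∃ t, |t| ≤ M ∧ huber M z = 2 * t * z - t ^ 2 := by
  unfold huber
  split_ifs with h
  · exact ⟨z, h, by ring⟩
  · push_neg at h
    rcases le_or_gt 0 z with hz | hz
    · exact ⟨M, by rw [abs_of_pos hM], by rw [abs_of_nonneg hz]⟩
    · exact ⟨-M, by rw [abs_neg, abs_of_pos hM], by rw [abs_of_neg hz]; ring⟩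

lemma huber_continuous (M : ℝ) : Continuous (huber M) := by
  unfold huber
  apply Continuous.if_le (by continuity) (by continuity) continuous_abs continuous_const
  intro z hz
  rw [← sq_abs, hz]
  ring

theorem huber_concomitant_extension (M : ℝ) (hM : 0 < M) (r : ℝ) :
    ConvexOn ℝ (Set.Ici 0)
      (fun s : ℝ => if 0 < s then s + s * huber M (r / s) else 2 * M * |r|) ∧
    LowerSemicontinuousOn
      (fun s : ℝ => if 0 < s then s + s * huber M (r / s) else 2 * M * |r|) (Set.Ici 0) ∧
    Filter.Tendsto (fun s : ℝ => s * huber M (r / s)) (nhdsWithin 0 (Set.Ioi 0))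
      (nhds (2 * M * |r|)) := by
  set L : ℝ → ℝ := fun s : ℝ => if 0 < s then s + s * huber M (r / s) else 2 * M * |r|
    with hL
  -- upper bound: L majorizes every affine function s + 2tr - t²s with |t| ≤ M
  have ub : ∀ s ∈ Set.Ici (0:ℝ), ∀ t : ℝ, |t| ≤ M → s + 2 * t * r - t ^ 2 * s ≤ L s := by
    intro s hs t ht
    by_cases h : 0 < s
    · simp only [hL, if_pos h]
      have h1 := huber_ge M (r / s) t ht
      have h2 : s * (2 * t * (r / s) - t ^ 2) ≤ s * huber M (r / s) :=
        mul_le_mul_of_nonneg_left h1 h.le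
      have h3 : s * (2 * t * (r / s) - t ^ 2) = 2 * t * r - t ^ 2 * s := by
        field_simp
      linarith
    · have hs0 : s = 0 := le_antisymm (not_lt.1 h) hs
      subst hs0
      simp only [hL, if_neg h]
      have h1 : t * r ≤ |t| * |r| := by
        rw [← abs_mul]; exact le_abs_self _
      have h2 : |t| * |r| ≤ M * |r| := mul_le_mul_of_nonneg_right ht (abs_nonneg r)
      nlinarith
  -- attainment
  have attain : ∀ s ∈ Set.Ici (0:ℝ), ∃ t : ℝ, |t| ≤ M ∧ L s = s + 2 * t * r - t ^ 2 * s := by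
    intro s hs
    by_cases h : 0 < s
    · obtain ⟨t, ht, heq⟩ := huber_attain M hM (r / s)
      refine ⟨t, ht, ?_⟩
      simp only [hL, if_pos h, heq]
      field_simp
      ring
    · have hs0 : s = 0 := le_antisymm (not_lt.1 h) hs
      subst hs0
      rcases le_or_gt 0 r with hr | hr
      · refine ⟨M, by rw [abs_of_pos hM], ?_⟩
        simp only [hL, if_neg h, abs_of_nonneg hr]
        ring
      · refine ⟨-M, by rw [abs_neg, abs_of_pos hM], ?_⟩
        simp only [hL, if_neg h, abs_of_neg hr]
        ring
  -- convexity
  have hconv : ConvexOn ℝ (Set.Ici 0) L := by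
    refine ⟨convex_Ici 0, ?_⟩
    intro x hx y hy a b ha hb hab
    have hmem : a • x + b • y ∈ Set.Ici (0:ℝ) := (convex_Ici 0) hx hy ha hb hab
    obtain ⟨t, ht, heq⟩ := attain _ hmem
    have h1 := ub x hx t ht
    have h2 := ub y hy t ht
    simp only [smul_eq_mul] at *
    have key : a * x + b * y + 2 * t * r - t ^ 2 * (a * x + b * y)
        = a * (x + 2 * t * r - t ^ 2 * x) + b * (y + 2 * t * r - t ^ 2 * y) := by
      have : a = 1 - b := by linarith
      subst this; ring
    rw [heq, key]
    have := add_le_add (mul_le_mul_of_nonneg_left h1 ha) (mul_le_mul_of_nonneg_left h2 hb)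
    linarith
  -- the limit
  have hlim : Filter.Tendsto (fun s : ℝ => s * huber M (r / s)) (nhdsWithin 0 (Set.Ioi 0))
      (nhds (2 * M * |r|)) := by
    rcases eq_or_ne r 0 with hr | hr
    · subst hr
      have : (fun s : ℝ => s * huber 0 (0 / s)) = fun _ => (0:ℝ) := by
        funext s; simp [huber, hM.le]
      simp only [zero_div, abs_zero, mul_zero]
      have : (fun s : ℝ => s * huber M 0) = fun _ => (0:ℝ) := by
        funext s; simp [huber, hM.le]
      rw [this]
      exact tendsto_const_nhds
    · have hrM : 0 < |r| / M := div_pos (abs_pos.2 hr) hM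
      have heq : ∀ᶠ s in nhdsWithin (0:ℝ) (Set.Ioi 0),
          2 * M * |r| - M ^ 2 * s = s * huber M (r / s) := by
        filter_upwards [Ioo_mem_nhdsGT_of_mem ⟨le_refl (0:ℝ), hrM⟩] with s hs
        have hs0 : 0 < s := hs.1
        have habs : |r / s| = |r| / s := by rw [abs_div, abs_of_pos hs0]
        have hlt : M < |r / s| := by
          rw [habs, lt_div_iff₀ hs0]
          have := (lt_div_iff₀ hM).1 hs.2
          linarith
        have : huber M (r / s) = 2 * M * |r / s| - M ^ 2 := by
          unfold huber; rw [if_neg (not_le.2 hlt)]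
        rw [this, habs]
        field_simp
      have hbase : Filter.Tendsto (fun s : ℝ => 2 * M * |r| - M ^ 2 * s)
          (nhdsWithin 0 (Set.Ioi 0)) (nhds (2 * M * |r|)) := by
        have : Filter.Tendsto (fun s : ℝ => 2 * M * |r| - M ^ 2 * s) (nhds 0)
            (nhds (2 * M * |r| - M ^ 2 * 0)) :=
          (continuous_const.sub (continuous_const.mul continuous_id)).tendsto 0
        simpa using this.mono_left nhdsWithin_le_nhds
      exact hbase.congr' heq
  -- lower semicontinuity via continuity on Ici 0
  have hcont : ContinuousOn L (Set.Ici 0) := by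
    intro s hs
    by_cases h : 0 < s
    · apply ContinuousAt.continuousWithinAt
      have hca : ContinuousAt (fun u : ℝ => u + u * huber M (r / u)) s := by
        apply ContinuousAt.add continuousAt_id
        apply ContinuousAt.mul continuousAt_id
        exact (huber_continuous M).continuousAt.comp
          (continuousAt_const.div continuousAt_id h.ne')
      apply hca.congr
      filter_upwards [isOpen_Ioi.mem_nhds h] with u hu
      exact (if_pos (Set.mem_Ioi.1 hu)).symm
    · have hs0 : s = 0 := le_antisymm (not_lt.1 h) hs
      subst hs0
      have hL0 : L 0 = 2 * M * |r| := by simp [hL]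
      rw [ContinuousWithinAt, hL0, ← Set.Ioi_insert, nhdsWithin_insert,
        Filter.tendsto_sup]
      constructor
      · rw [Filter.tendsto_pure_left]
        intro U hU
        exact hL0 ▸ mem_of_mem_nhds hU
      · have h1 : Filter.Tendsto (fun u : ℝ => u + u * huber M (r / u))
            (nhdsWithin 0 (Set.Ioi 0)) (nhds (2 * M * |r|)) := by
          have h2 : Filter.Tendsto (fun u : ℝ => u) (nhdsWithin (0:ℝ) (Set.Ioi 0))
              (nhds 0) := Filter.tendsto_id.mono_left nhdsWithin_le_nhds
          simpa using h2.add hlim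
        apply h1.congr'
        filter_upwards [self_mem_nhdsWithin] with u hu
        simp only [hL, if_pos (Set.mem_Ioi.1 hu)]
  exact ⟨hconv, hcont.lowerSemicontinuousOn, hlim⟩
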